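/- Let A, B, C and A', B', C' be two triangles (noncollinear triples) in EuclideanSpace ℝ (Fin 2) whose corresponding bisector lengths coincide: t_A = t_{A'}, t_B = t_{B'}, t_C = t_{C'}. Then the triangles are congruent, i.e. dist B C = dist B' C', dist C A = dist C' A', and dist A B = dist A' B'. (A triangle is determined up to isometry by the three lengths of its internal angle bisectors.) -/

import Mathlib

open EuclideanGeometry Real

/-!
By Stewart's theorem the bisector from the vertex opposite the side `a` of a triangle with
sides `a, b, c` satisfies `t_a² = b c ((b + c)² - a²) / (b + c)²`. With `p = a + b + c` this
factors as `t_a² = (a b c / p) · φ (a / p)`, where `φ x = (1 - 2x) / (x (1 - x)²)` is positive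
and strictly decreasing on `(0, 1/2)`, the range of the ratios `a / p`.

Suppose two triangles have the same bisector lengths. If `a b c / p < a' b' c' / p'`, then
`φ (a / p) > φ (a' / p')`, i.e. `a / p < a' / p'`, and likewise for the other two sides; this is
impossible since both triples of ratios sum to `1`. So `a b c / p = a' b' c' / p'` and all ratios
agree, and as `a b c / p = p² (a / p) (b / p) (c / p)`, also `p = p'`.
-/

/-- The length of the internal angle bisector from vertex `A` in triangle `A B C`:
the distance from `A` to the point on `BC` dividing it in ratio `AB : AC`. -/
noncomputable def bisectorLength (A B C : EuclideanSpace ℝ (Fin 2)) : ℝ :=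
  dist A (((dist C A) / (dist C A + dist A B)) • B + ((dist A B) / (dist C A + dist A B)) • C)

theorem StrictAntiOn.eq_of_mul_comp_eq_of_sum_eq {ι : Type*} [Fintype ι] [Nonempty ι]
    {f : ℝ → ℝ} {s : Set ℝ} (hf : StrictAntiOn f s) (hpos : ∀ x ∈ s, 0 < f x)
    {α α' : ι → ℝ} (hα : ∀ i, α i ∈ s) (hα' : ∀ i, α' i ∈ s) (hsum : ∑ i, α i = ∑ i, α' i)
    {k k' : ℝ} (hk : 0 < k) (hk' : 0 < k') (h : ∀ i, k * f (α i) = k' * f (α' i)) :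
    k = k' ∧ α = α' := by
  wlog hkk : k ≤ k' generalizing k k' α α'
  · obtain ⟨hk, hα⟩ := this hα' hα hsum.symm hk' hk (fun i ↦ (h i).symm) (le_of_not_ge hkk)
    exact ⟨hk.symm, hα.symm⟩
  obtain hlt | rfl := hkk.lt_or_eq
  · exfalso
    have hα_lt : ∀ i, α i < α' i := fun i ↦ by
      have : k' * f (α' i) < k' * f (α i) := by
        rw [← h i]; exact mul_lt_mul_of_pos_right hlt (hpos _ (hα i))
      exact (hf.lt_iff_gt (hα' i) (hα i)).1 (lt_of_mul_lt_mul_left this hk'.le)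
    exact hsum.not_lt (Finset.sum_lt_sum_of_nonempty Finset.univ_nonempty fun i _ ↦ hα_lt i)
  · exact ⟨rfl, funext fun i ↦ hf.injOn (hα i) (hα' i) (mul_left_cancel₀ hk.ne' (h i))⟩

theorem norm_sub_smul_add_smul_sq {V : Type*} [NormedAddCommGroup V] [InnerProductSpace ℝ V]
    (a b c : V) {μ ν : ℝ} (h : μ + ν = 1) :
    ‖a - (μ • b + ν • c)‖ ^ 2 = μ * ‖a - b‖ ^ 2 + ν * ‖a - c‖ ^ 2 - μ * ν * ‖b - c‖ ^ 2 := by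
  have hsplit : a - (μ • b + ν • c) = μ • (a - b) + ν • (a - c) := by
    linear_combination (norm := module) -h • a
  rw [hsplit, show b - c = (a - c) - (a - b) by abel]
  generalize a - b = x, a - c = y
  rw [norm_add_sq_real, norm_sub_sq_real, norm_smul, norm_smul, real_inner_smul_left,
    real_inner_smul_right, real_inner_comm x y, Real.norm_eq_abs, Real.norm_eq_abs, mul_pow,
    mul_pow, sq_abs, sq_abs]
  obtain rfl : ν = 1 - μ := by linarith
  ring

theorem dist_lt_dist_add_dist_of_not_collinear {V P : Type*} [NormedAddCommGroup V]
    [NormedSpace ℝ V] [StrictConvexSpace ℝ V] [MetricSpace P] [NormedAddTorsor V P] {A B C : P}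
    (h : ¬ Collinear ℝ ({A, B, C} : Set P)) :
    dist B C < dist C A + dist A B ∧ dist C A < dist A B + dist B C ∧
      dist A B < dist B C + dist C A := by
  have hstrict : ∀ {X Y Z : P}, ({X, Y, Z} : Set P) = {A, B, C} →
      dist X Z < dist X Y + dist Y Z :=
    fun hs ↦ dist_lt_dist_add_dist_iff.2 fun hw ↦ h (hs ▸ hw.collinear)
  have hBAC := hstrict (Set.insert_comm B A {C})
  have hABC := hstrict (X := A) (Y := B) (Z := C) rfl
  have hACB := hstrict (congrArg (insert A) (Set.pair_comm C B))
  exact ⟨by linarith [dist_comm A B, dist_comm C A], by linarith [dist_comm A C],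
    by linarith [dist_comm A C, dist_comm B C]⟩

noncomputable def bisectorSq (a b c : ℝ) : ℝ := b * c * ((b + c) ^ 2 - a ^ 2) / (b + c) ^ 2

theorem bisectorLength_sq (A B C : EuclideanSpace ℝ (Fin 2)) (h : dist C A + dist A B ≠ 0) :
    bisectorLength A B C ^ 2 = bisectorSq (dist B C) (dist C A) (dist A B) := by
  rw [bisectorLength, dist_eq_norm, norm_sub_smul_add_smul_sq _ _ _ (by field_simp),
    ← dist_eq_norm, ← dist_eq_norm, ← dist_eq_norm, dist_comm A C, bisectorSq]
  field_simp
  ring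

noncomputable def bisectorShape (x : ℝ) : ℝ := (1 - 2 * x) / (x * (1 - x) ^ 2)

theorem bisectorShape_pos {x : ℝ} (hx : x ∈ Set.Ioo 0 (1 / 2)) : 0 < bisectorShape x := by
  obtain ⟨h0, h1⟩ := hx
  have : 0 < 1 - 2 * x := by linarith
  have : 0 < 1 - x := by linarith
  unfold bisectorShape
  positivity

theorem strictAntiOn_bisectorShape : StrictAntiOn bisectorShape (Set.Ioo 0 (1 / 2)) := by
  rintro x ⟨hx0, hx1⟩ y ⟨hy0, hy1⟩ hxy
  have hx : 0 < 1 - x := by linarith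
  have hy : 0 < 1 - y := by linarith
  have hbracket : 0 < (1 - x - y) ^ 2 + x * y * (3 - 2 * (x + y)) := by
    have : 0 < 3 - 2 * (x + y) := by linarith
    positivity
  unfold bisectorShape
  rw [div_lt_div_iff₀ (by positivity) (by positivity)]
  nlinarith [mul_pos (sub_pos.2 hxy) hbracket]

theorem bisectorSq_eq_mul_bisectorShape {a b c p : ℝ} (hp : a + b + c = p) (ha0 : 0 < a)
    (ha : a < b + c) : bisectorSq a b c = a * b * c / p * bisectorShape (a / p) := by
  subst hp
  have : 0 < b + c := by linarith
  have : 0 < a + b + c := by linarith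
  have h1 : 1 - a / (a + b + c) = (b + c) / (a + b + c) := by field_simp; ring
  have h2 : 1 - 2 * (a / (a + b + c)) = (b + c - a) / (a + b + c) := by field_simp; ring
  unfold bisectorSq bisectorShape
  rw [h1, h2]
  field_simp
  ring

noncomputable def sideRatios (a b c : ℝ) : Fin 3 → ℝ :=
  ![a / (a + b + c), b / (a + b + c), c / (a + b + c)]

section SideRatios

variable {a b c : ℝ}

theorem sideRatios_mem_Ioo (ha : a < b + c) (hb : b < c + a) (hc : c < a + b) (i : Fin 3) :
    sideRatios a b c i ∈ Set.Ioo 0 (1 / 2) := by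
  have hp : 0 < a + b + c := by linarith
  fin_cases i <;> exact ⟨div_pos (by linarith) hp, (div_lt_iff₀ hp).2 (by linarith)⟩

theorem sum_sideRatios (hp : a + b + c ≠ 0) : ∑ i, sideRatios a b c i = 1 := by
  simp only [sideRatios, Fin.sum_univ_three, Matrix.cons_val_zero, Matrix.cons_val_one,
    Matrix.cons_val_two, Matrix.head_cons, Matrix.tail_cons]
  rw [← add_div, ← add_div, div_self hp]

theorem bisectorSq_eq_mul_bisectorShape_sideRatios (ha : a < b + c) (hb : b < c + a)
    (hc : c < a + b) (i : Fin 3) :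
    ![bisectorSq a b c, bisectorSq b c a, bisectorSq c a b] i
      = a * b * c / (a + b + c) * bisectorShape (sideRatios a b c i) := by
  fin_cases i
  · exact bisectorSq_eq_mul_bisectorShape rfl (by linarith) ha
  · show bisectorSq b c a = a * b * c / (a + b + c) * bisectorShape (b / (a + b + c))
    rw [mul_rotate a b c]
    exact bisectorSq_eq_mul_bisectorShape (by ring) (by linarith) hb
  · show bisectorSq c a b = a * b * c / (a + b + c) * bisectorShape (c / (a + b + c))
    rw [mul_rotate a b c, mul_rotate b c a]
    exact bisectorSq_eq_mul_bisectorShape (by ring) (by linarith) hc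

theorem eq_of_sideRatios_eq {a' b' c' : ℝ} (ha : 0 < a) (hb : 0 < b) (hc : 0 < c)
    (hp' : 0 < a' + b' + c') (hr : sideRatios a b c = sideRatios a' b' c')
    (hk : a * b * c / (a + b + c) = a' * b' * c' / (a' + b' + c')) :
    a = a' ∧ b = b' ∧ c = c' := by
  have hp : 0 < a + b + c := by positivity
  have hx : a / (a + b + c) = a' / (a' + b' + c') := congrFun hr 0
  have hy : b / (a + b + c) = b' / (a' + b' + c') := congrFun hr 1
  have hz : c / (a + b + c) = c' / (a' + b' + c') := congrFun hr 2
  have hscale : ∀ {x y z : ℝ}, 0 < x + y + z → x * y * z / (x + y + z)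
      = (x + y + z) ^ 2 * (x / (x + y + z) * (y / (x + y + z)) * (z / (x + y + z))) :=
    fun _ ↦ by field_simp
  rw [hscale hp, hscale hp', ← hx, ← hy, ← hz] at hk
  have hpp : a + b + c = a' + b' + c' :=
    (pow_left_inj₀ hp.le hp'.le two_ne_zero).1 (mul_right_cancel₀ (by positivity) hk)
  rw [hpp] at hx hy hz
  exact ⟨(div_left_inj' hp'.ne').1 hx, (div_left_inj' hp'.ne').1 hy, (div_left_inj' hp'.ne').1 hz⟩

end SideRatios

theorem eq_of_bisectorSq_eq {a b c a' b' c' : ℝ}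
    (ha : a < b + c) (hb : b < c + a) (hc : c < a + b)
    (ha' : a' < b' + c') (hb' : b' < c' + a') (hc' : c' < a' + b')
    (eA : bisectorSq a b c = bisectorSq a' b' c') (eB : bisectorSq b c a = bisectorSq b' c' a')
    (eC : bisectorSq c a b = bisectorSq c' a' b') :
    a = a' ∧ b = b' ∧ c = c' := by
  have ha0 : 0 < a := by linarith
  have hb0 : 0 < b := by linarith
  have hc0 : 0 < c := by linarith
  have hp : 0 < a + b + c := by linarith
  have hp' : 0 < a' + b' + c' := by linarith
  have hk' : 0 < a' * b' * c' / (a' + b' + c') := by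
    have : 0 < a' := by linarith
    have : 0 < b' := by linarith
    have : 0 < c' := by linarith
    positivity
  obtain ⟨hk, hr⟩ := strictAntiOn_bisectorShape.eq_of_mul_comp_eq_of_sum_eq
    (k := a * b * c / (a + b + c)) (fun _ hx ↦ bisectorShape_pos hx)
    (sideRatios_mem_Ioo ha hb hc) (sideRatios_mem_Ioo ha' hb' hc')
    (by rw [sum_sideRatios hp.ne', sum_sideRatios hp'.ne']) (by positivity) hk'
    fun i ↦ by
      rw [← bisectorSq_eq_mul_bisectorShape_sideRatios ha hb hc,
        ← bisectorSq_eq_mul_bisectorShape_sideRatios ha' hb' hc']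
      fin_cases i; exacts [eA, eB, eC]
  exact eq_of_sideRatios_eq ha0 hb0 hc0 hp' hr hk

theorem triangle_determined_by_bisectors (A B C A' B' C' : EuclideanSpace ℝ (Fin 2))
    (h : ¬ Collinear ℝ ({A, B, C} : Set (EuclideanSpace ℝ (Fin 2))))
    (h' : ¬ Collinear ℝ ({A', B', C'} : Set (EuclideanSpace ℝ (Fin 2))))
    (htA : bisectorLength A B C = bisectorLength A' B' C')
    (htB : bisectorLength B C A = bisectorLength B' C' A')
    (htC : bisectorLength C A B = bisectorLength C' A' B') :
    dist B C = dist B' C' ∧ dist C A = dist C' A' ∧ dist A B = dist A' B' := by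
  obtain ⟨ta, tb, tc⟩ := dist_lt_dist_add_dist_of_not_collinear h
  obtain ⟨ta', tb', tc'⟩ := dist_lt_dist_add_dist_of_not_collinear h'
  refine eq_of_bisectorSq_eq ta tb tc ta' tb' tc' ?_ ?_ ?_
  · rw [← bisectorLength_sq _ _ _ (dist_nonneg.trans_lt ta).ne',
      ← bisectorLength_sq _ _ _ (dist_nonneg.trans_lt ta').ne', htA]
  · rw [← bisectorLength_sq _ _ _ (dist_nonneg.trans_lt tb).ne',
      ← bisectorLength_sq _ _ _ (dist_nonneg.trans_lt tb').ne', htB]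
  · rw [← bisectorLength_sq _ _ _ (dist_nonneg.trans_lt tc).ne',
      ← bisectorLength_sq _ _ _ (dist_nonneg.trans_lt tc').ne', htC]
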